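/- arXiv:1209.3226 — 5 statements merged into one kernel-verified Lean document; each statement's English description precedes it below -/
import Mathlib

section
/- The center of the free associative algebra T(V) on a vector space V of dimension at least 2 over a field is trivial (equals the scalars). -/
/-!
If `f` commutes with a letter `b`, compare the coefficients of `w * b` in `f * b` and `b * f`:
the first is `f w`, and the second vanishes as soon as `w` does not begin with `b`. With at least
two letters such a `b` exists for every nonempty word `w`, so a central `f` is a scalar. A basis of
`V` identifies `T(V)` with the free algebra on the basis, i.e. the monoid algebra of the free
monoid on at least two letters.
-/

theorem FreeMonoid.exists_forall_of_mul_ne_mul_of {ι : Type*} [Nontrivial ι] {w : FreeMonoid ι}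
    (hw : w ≠ 1) : ∃ b : ι, ∀ d, of b * d ≠ w * of b := by
  obtain ⟨a, t, rfl⟩ : ∃ a t, w = of a * t := by
    induction w using FreeMonoid.inductionOn' with
    | one => exact absurd rfl hw
    | of_mul a t _ => exact ⟨a, t, rfl⟩
  obtain ⟨b, hb⟩ := exists_ne a
  refine ⟨b, fun d hd => hb ?_⟩
  simpa using congrArg (List.head? ∘ FreeMonoid.toList) hd

namespace MonoidAlgebra

variable {R ι : Type*}

theorem coeff_eq_zero_of_commute_of [Semiring R] {f : MonoidAlgebra R (FreeMonoid ι)} {w : FreeMonoid ι}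
    {b : ι} (hf : Commute f (single (FreeMonoid.of b) 1))
    (hb : ∀ d, FreeMonoid.of b * d ≠ w * FreeMonoid.of b) : f.coeff w = 0 := by
  have hright : (f * single (FreeMonoid.of b) 1).coeff (w * FreeMonoid.of b) = f.coeff w := by
    rw [coeff_mul_single_eq_coeff_mul w fun _ _ => mul_right_cancel_iff, mul_one]
  rw [← hright, hf.eq, coeff_single_mul_of_forall_mul_ne _ _ hb]

instance isCentral_freeMonoid [CommSemiring R] [Nontrivial ι] :
    Algebra.IsCentral R (MonoidAlgebra R (FreeMonoid ι)) where
  out f hf := by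
    refine ⟨f.coeff 1, ?_⟩
    ext w
    by_cases hw : w = 1
    · simp [hw, Algebra.algebraMap_eq_smul_one]
    · obtain ⟨b, hb⟩ := FreeMonoid.exists_forall_of_mul_ne_mul_of hw
      have hcomm : Commute f (single (FreeMonoid.of b) 1) :=
        (Subalgebra.mem_center_iff.mp hf _).symm
      simp [coeff_eq_zero_of_commute_of hcomm hb, Algebra.algebraMap_eq_smul_one, one_def,
        Ne.symm hw]

end MonoidAlgebra

instance FreeAlgebra.isCentral {R X : Type*} [CommSemiring R] [Nontrivial X] :
    Algebra.IsCentral R (FreeAlgebra R X) :=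
  .of_algEquiv R _ _ FreeAlgebra.equivMonoidAlgebraFreeMonoid.symm

theorem TensorAlgebra.isCentral_of_one_lt_rank {R M : Type*} [CommRing R] [Nontrivial R]
    [AddCommGroup M] [Module R M] [Module.Free R M] (h : 1 < Module.rank R M) :
    Algebra.IsCentral R (TensorAlgebra R M) := by
  have : Nontrivial (Module.Free.ChooseBasisIndex R M) := by
    rwa [← Cardinal.one_lt_iff_nontrivial, ← Module.Free.rank_eq_card_chooseBasisIndex]
  exact .of_algEquiv R _ _ (TensorAlgebra.equivFreeAlgebra (Module.Free.chooseBasis R M)).symm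

/-- The center of the free associative (tensor) algebra `T(V)` on a vector
space `V` of dimension at least 2 over a field is trivial: it consists of the
scalars only. -/
theorem center_tensorAlgebra_eq_bot (K : Type*) [Field K] (V : Type*)
    [AddCommGroup V] [Module K V] (h : 2 ≤ Module.rank K V) :
    Subalgebra.center K (TensorAlgebra K V) = ⊥ := by
  have := TensorAlgebra.isCentral_of_one_lt_rank (Cardinal.one_lt_two.trans_le h)
  exact Algebra.IsCentral.center_eq_bot K _
end

section
/- The cohomology of the dga Λ(2l) in odd degrees is spanned by the classes of y₁y₂^p for p ≥ 0, and in positive even degrees by the classes of α_p := y₂^p x₁ − 2p y₁x₂y₂^{p−1} for p ≥ 0; each nonzero cohomology group has dimension at most 1. -/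
/-!
Every element `x` of `Λ(2l)` decomposes as `x = proj x + leftHtpy (d x) + d (rightHtpy x)` for
ℚ-linear maps given on monomials, where `proj` sends each monomial either to `0` or to one of the
cocycles `1`, `β_p`, `α_p` of the same degree. Hence every cocycle is cohomologous to a linear
combination of these. For `l ≥ 1` their degrees `0`, `2l - 1 + p(4l - 2)` (odd) and
`2l + p(4l - 2)` (even, positive) are pairwise distinct, so each degree contains at most one of
them.
-/

namespace LoopSphereModel

noncomputable section

/-- Basis of the Sullivan model `Λ(2l) = Λ(y₁,x₁,y₂,x₂)` of the free loop space
`LS^{2l}`: `(e, a, p, f)` codes the monomial `y₁^e · x₁^a · y₂^p · x₂^f`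
(`e, f ∈ {0,1}` since `y₁, x₂` are odd; `x₁, y₂` are even). -/
abbrev Bas : Type := Bool × ℕ × ℕ × Bool

/-- The underlying ℚ-vector space of `Λ(2l)`. -/
abbrev Mod : Type := Bas →₀ ℚ

/-- The basis monomial `y₁^e x₁^a y₂^p x₂^f`. -/
def mon (b : Bas) : Mod := Finsupp.single b 1

/-- Degree of a basis monomial: `|y₁| = 2l-1`, `|x₁| = 2l`, `|y₂| = 4l-2`,
`|x₂| = 4l-1`. -/
def mdeg (l : ℕ) (b : Bas) : ℕ :=
  (if b.1 then 2 * l - 1 else 0) + b.2.1 * (2 * l) + b.2.2.1 * (4 * l - 2) +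
    (if b.2.2.2 then 4 * l - 1 else 0)

/-- The differential on basis monomials, obtained by extending
`dy₁ = dx₁ = 0`, `dx₂ = x₁²`, `dy₂ = -2x₁y₁` as a degree `+1` derivation:
`d(y₁^e x₁^a y₂^p x₂^f) = (-2p)·y₁ x₁^{a+1} y₂^{p-1} x₂^f` (only when `e = 0`)
`+ (-1)^e · y₁^e x₁^{a+2} y₂^p` (only when `f = 1`). -/
def dmon (b : Bas) : Mod :=
  (if b.1 then 0
    else (-(2 * (b.2.2.1 : ℚ))) • mon (true, b.2.1 + 1, b.2.2.1 - 1, b.2.2.2)) +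
  (if b.2.2.2 then
      (if b.1 then (-1 : ℚ) else 1) • mon (b.1, b.2.1 + 2, b.2.2.1, false)
    else 0)

/-- The differential of `Λ(2l)` as a linear map. -/
def dL : Mod →ₗ[ℚ] Mod :=
  Finsupp.lsum ℚ fun b => LinearMap.toSpanSingleton ℚ Mod (dmon b)

/-- Product of two basis monomials in the free graded-commutative algebra:
zero if an odd generator repeats, otherwise the reordered monomial with the
Koszul sign `(-1)^{e'·f}` (moving `y₁'` past `x₂^f`). -/
def monMul (b b' : Bas) : Mod :=
  if b.1 && b'.1 then 0
  else if b.2.2.2 && b'.2.2.2 then 0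
  else (if b'.1 && b.2.2.2 then (-1 : ℚ) else 1) •
    mon (b.1 || b'.1, b.2.1 + b'.2.1, b.2.2.1 + b'.2.2.1, b.2.2.2 || b'.2.2.2)

/-- The (graded-commutative) multiplication of `Λ(2l)`, extended bilinearly. -/
def mulF (x y : Mod) : Mod :=
  x.sum fun b c => y.sum fun b' c' => (c * c') • monMul b b'

/-- The cocycle `α_p := y₂^p x₁ - 2p · y₁ x₂ y₂^{p-1}`
(in canonical order `x₁ y₂^p - 2p · y₁ y₂^{p-1} x₂`). -/
def alphaEl (p : ℕ) : Mod :=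
  mon (false, 1, p, false) - (2 * (p : ℚ)) • mon (true, 0, p - 1, true)

/-- The cocycle `β_p := y₁ y₂^p`. -/
def betaEl (p : ℕ) : Mod := mon (true, 0, p, false)

/-- The degree-`i` homogeneous part of `Λ(2l)`. -/
def Dsub (l i : ℕ) : Submodule ℚ Mod := Finsupp.supported ℚ ℚ {b | mdeg l b = i}

/-- Degree-`i` cocycles of `Λ(2l)`. -/
def Zc (l i : ℕ) : Submodule ℚ Mod := Dsub l i ⊓ LinearMap.ker dL

/-- Degree-`i` cohomology `H^i(Λ(2l))`. -/
def Hc (l i : ℕ) : Type :=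
  Zc l i ⧸ Submodule.comap (Zc l i).subtype (LinearMap.range dL ⊓ Dsub l i)

instance (l i : ℕ) : AddCommGroup (Hc l i) := by unfold Hc; infer_instance
instance (l i : ℕ) : Module ℚ (Hc l i) := by unfold Hc; infer_instance

theorem _root_.Submodule.rank_quotient_comap_le_one_of_le_sup_span {K V : Type*} [DivisionRing K]
    [AddCommGroup V] [Module K V] {Z B : Submodule K V} {S : Set V} (hS : S.Subsingleton)
    (hSZ : S ⊆ Z) (hZ : Z ≤ B ⊔ Submodule.span K S) :
    Module.rank K (Z ⧸ B.comap Z.subtype) ≤ 1 := by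
  obtain ⟨v, hvZ, hSv⟩ : ∃ v ∈ Z, S ⊆ {v} := by
    rcases hS.eq_empty_or_singleton with rfl | ⟨v, rfl⟩
    · exact ⟨0, Z.zero_mem, Set.empty_subset _⟩
    · exact ⟨v, hSZ rfl, subset_rfl⟩
  rw [rank_le_one_iff]
  refine ⟨Submodule.Quotient.mk ⟨v, hvZ⟩, fun w => ?_⟩
  obtain ⟨⟨z, hz⟩, rfl⟩ := Submodule.Quotient.mk_surjective _ w
  obtain ⟨b, hb, s, hs, rfl⟩ := Submodule.mem_sup.1 (hZ hz)
  obtain ⟨c, rfl⟩ := Submodule.mem_span_singleton.1 (Submodule.span_mono hSv hs)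
  refine ⟨c, (Submodule.Quotient.eq _).2 ?_⟩
  simpa using B.neg_mem hb

theorem _root_.Finsupp.map_mem_span_image_of_mem_supported {α R M : Type*} [Semiring R]
    [AddCommMonoid M] [Module R M] (f : (α →₀ R) →ₗ[R] M) {s : Set α} {z : α →₀ R}
    (hz : z ∈ Finsupp.supported R R s) :
    f z ∈ Submodule.span R ((fun a => f (Finsupp.single a 1)) '' s) := by
  rw [Finsupp.supported_eq_span_single] at hz
  simpa [Submodule.map_span, Set.image_image] using Submodule.mem_map_of_mem (f := f) hz

def projMon : Bas → Mod
  | (true, 0, p, false) => betaEl p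
  | (false, 0, 0, false) => mon (false, 0, 0, false)
  | (false, 1, p, false) => alphaEl p
  | _ => 0

-- The coefficients of the two homotopies invert `d x₂ = x₁²` and `d y₂^{p+1} = -2(p+1) x₁y₁y₂^p`.
def leftHtpyMon : Bas → Mod
  | (e, a + 2, p, false) => (if e then -1 else 1 : ℚ) • mon (e, a, p, true)
  | (true, 1, p, false) => (-1 / (2 * (p + 1)) : ℚ) • mon (false, 0, p + 1, false)
  | _ => 0

def rightHtpyMon : Bas → Mod
  | (true, a + 1, p, false) => (-1 / (2 * (p + 1)) : ℚ) • mon (false, a, p + 1, false)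
  | (false, a + 2, p, false) => mon (false, a, p, true)
  | _ => 0

def proj : Mod →ₗ[ℚ] Mod := Finsupp.linearCombination ℚ projMon

def leftHtpy : Mod →ₗ[ℚ] Mod := Finsupp.linearCombination ℚ leftHtpyMon

def rightHtpy : Mod →ₗ[ℚ] Mod := Finsupp.linearCombination ℚ rightHtpyMon

@[simp]
theorem dL_mon (b : Bas) : dL (mon b) = dmon b := by
  simp [dL, mon]

@[simp]
theorem leftHtpy_mon (b : Bas) : leftHtpy (mon b) = leftHtpyMon b := by
  simp [leftHtpy, mon]

theorem projMon_add_leftHtpy_add_rightHtpyMon (b : Bas) :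
    projMon b + leftHtpy (dmon b) + dL (rightHtpyMon b) = mon b := by
  rcases b with ⟨_ | _, _ | _ | a, _ | p, _ | _⟩ <;>
    simp [projMon, leftHtpyMon, rightHtpyMon, dmon, alphaEl, betaEl, smul_smul]
  all_goals rw [← neg_smul]; convert one_smul ℚ _; field_simp

theorem proj_add_leftHtpy_add_rightHtpy (x : Mod) :
    proj x + leftHtpy (dL x) + dL (rightHtpy x) = x := by
  have h : proj + leftHtpy ∘ₗ dL + dL ∘ₗ rightHtpy = LinearMap.id := by
    refine Finsupp.basisSingleOne.ext fun b => ?_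
    change proj (mon b) + leftHtpy (dL (mon b)) + dL (rightHtpy (mon b)) = mon b
    rw [dL_mon]
    simpa [proj, rightHtpy, mon] using projMon_add_leftHtpy_add_rightHtpyMon b
  exact LinearMap.congr_fun h x

theorem proj_add_dL_rightHtpy_of_mem_ker {z : Mod} (hz : z ∈ LinearMap.ker dL) :
    proj z + dL (rightHtpy z) = z := by
  simpa [LinearMap.mem_ker.1 hz] using proj_add_leftHtpy_add_rightHtpy z

def betaGens (l i : ℕ) : Set Mod := {m | ∃ p, m = betaEl p ∧ mdeg l (true, 0, p, false) = i}

def unitGens (i : ℕ) : Set Mod := {m | m = mon (false, 0, 0, false) ∧ i = 0}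

def alphaGens (l i : ℕ) : Set Mod := {m | ∃ p, m = alphaEl p ∧ 2 * l + p * (4 * l - 2) = i}

def cocycleGens (l i : ℕ) : Set Mod := betaGens l i ∪ unitGens i ∪ alphaGens l i

theorem mdeg_beta (l p : ℕ) : mdeg l (true, 0, p, false) = 2 * l - 1 + p * (4 * l - 2) := by
  simp [mdeg]

theorem mdeg_alpha (l p : ℕ) : mdeg l (false, 1, p, false) = 2 * l + p * (4 * l - 2) := by
  simp [mdeg]

theorem projMon_mem_span_cocycleGens (l : ℕ) (b : Bas) :
    projMon b ∈ Submodule.span ℚ (cocycleGens l (mdeg l b)) := by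
  rcases b with ⟨_ | _, _ | _ | a, _ | p, _ | _⟩
  all_goals first
    | exact zero_mem _
    | exact Submodule.subset_span (Or.inl (Or.inl ⟨_, rfl, rfl⟩))
    | exact Submodule.subset_span (Or.inl (Or.inr ⟨rfl, by simp [mdeg]⟩))
    | exact Submodule.subset_span (Or.inr ⟨_, rfl, (mdeg_alpha l _).symm⟩)

theorem Zc_le_range_sup_span_cocycleGens (l i : ℕ) :
    Zc l i ≤ LinearMap.range dL ⊔ Submodule.span ℚ (cocycleGens l i) := by
  intro z hz
  have hproj : proj z ∈ Submodule.span ℚ (cocycleGens l i) := by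
    refine Submodule.span_le.2 ?_ (Finsupp.map_mem_span_image_of_mem_supported proj hz.1)
    rintro _ ⟨b, rfl, rfl⟩
    simpa [proj] using projMon_mem_span_cocycleGens l b
  rw [← proj_add_dL_rightHtpy_of_mem_ker hz.2, add_comm]
  exact Submodule.add_mem_sup ⟨_, rfl⟩ hproj

theorem mon_mem_Dsub {l i : ℕ} {b : Bas} (h : mdeg l b = i) : mon b ∈ Dsub l i :=
  Finsupp.single_mem_supported ℚ 1 h

theorem betaEl_mem_Zc (l p : ℕ) : betaEl p ∈ Zc l (mdeg l (true, 0, p, false)) :=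
  ⟨mon_mem_Dsub rfl, by simp [betaEl, dmon]⟩

theorem alphaEl_mem_Zc {l : ℕ} (hl : 1 ≤ l) (p : ℕ) :
    alphaEl p ∈ Zc l (2 * l + p * (4 * l - 2)) := by
  refine ⟨?_, by simp [alphaEl, dmon]⟩
  rcases p with _ | p
  · simpa [alphaEl] using mon_mem_Dsub (mdeg_alpha l 0)
  · have hdeg : mdeg l (true, 0, p, true) = 2 * l + (p + 1) * (4 * l - 2) := by
      simp [mdeg, add_one_mul]; omega
    rw [alphaEl, Nat.add_sub_cancel]
    exact sub_mem (mon_mem_Dsub (mdeg_alpha l _)) (Submodule.smul_mem _ _ (mon_mem_Dsub hdeg))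

theorem cocycleGens_subset_Zc {l : ℕ} (hl : 1 ≤ l) (i : ℕ) : cocycleGens l i ⊆ Zc l i := by
  rintro _ ((⟨p, rfl, rfl⟩ | ⟨rfl, rfl⟩) | ⟨p, rfl, rfl⟩)
  · exact betaEl_mem_Zc l p
  · exact ⟨mon_mem_Dsub (by simp [mdeg]), by simp [dmon]⟩
  · exact alphaEl_mem_Zc hl p

theorem betaGens_subsingleton {l : ℕ} (hl : 1 ≤ l) (i : ℕ) : (betaGens l i).Subsingleton := by
  rintro _ ⟨p, rfl, hp⟩ _ ⟨q, rfl, hq⟩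
  rw [mdeg_beta] at hp hq
  rw [Nat.eq_of_mul_eq_mul_right (by omega : 0 < 4 * l - 2) (by omega : p * _ = q * _)]

theorem unitGens_subsingleton (i : ℕ) : (unitGens i).Subsingleton := by
  rintro _ ⟨rfl, -⟩ _ ⟨rfl, -⟩
  rfl

theorem alphaGens_subsingleton {l : ℕ} (hl : 1 ≤ l) (i : ℕ) : (alphaGens l i).Subsingleton := by
  rintro _ ⟨p, rfl, hp⟩ _ ⟨q, rfl, hq⟩
  rw [Nat.eq_of_mul_eq_mul_right (by omega : 0 < 4 * l - 2) (by omega : p * _ = q * _)]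

theorem four_mul_sub_two (l : ℕ) : 4 * l - 2 = 2 * (2 * l - 1) := by omega

theorem betaGens_eq_empty {l i : ℕ} (hl : 1 ≤ l) (hi : Even i) : betaGens l i = ∅ := by
  refine Set.eq_empty_iff_forall_notMem.2 ?_
  rintro _ ⟨p, -, rfl⟩
  rw [mdeg_beta, four_mul_sub_two, mul_left_comm] at hi
  obtain ⟨k, hk⟩ := hi
  omega

theorem unitGens_eq_empty {i : ℕ} (hi : i ≠ 0) : unitGens i = ∅ :=
  Set.eq_empty_iff_forall_notMem.2 fun _ h => hi h.2

theorem alphaGens_eq_empty {l i : ℕ} (hl : 1 ≤ l) (hi : i = 0 ∨ Odd i) : alphaGens l i = ∅ := by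
  refine Set.eq_empty_iff_forall_notMem.2 ?_
  rintro _ ⟨p, -, rfl⟩
  rw [four_mul_sub_two, mul_left_comm] at hi
  rcases hi with hi | ⟨k, hk⟩ <;> omega

theorem cocycleGens_of_odd {l i : ℕ} (hl : 1 ≤ l) (hi : Odd i) :
    cocycleGens l i = betaGens l i := by
  rw [cocycleGens, unitGens_eq_empty (by rintro rfl; simp at hi), alphaGens_eq_empty hl (.inr hi),
    Set.union_empty, Set.union_empty]

theorem cocycleGens_of_even {l i : ℕ} (hl : 1 ≤ l) (h0 : 0 < i) (hi : Even i) :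
    cocycleGens l i = alphaGens l i := by
  rw [cocycleGens, betaGens_eq_empty hl hi, unitGens_eq_empty h0.ne', Set.union_empty,
    Set.empty_union]

theorem cocycleGens_zero {l : ℕ} (hl : 1 ≤ l) : cocycleGens l 0 = unitGens 0 := by
  rw [cocycleGens, betaGens_eq_empty hl Even.zero, alphaGens_eq_empty hl (.inl rfl),
    Set.union_empty, Set.empty_union]

theorem cocycleGens_subsingleton {l : ℕ} (hl : 1 ≤ l) (i : ℕ) :
    (cocycleGens l i).Subsingleton := by
  rcases Nat.even_or_odd i with hi | hi
  · rcases Nat.eq_zero_or_pos i with rfl | h0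
    · exact cocycleGens_zero hl ▸ unitGens_subsingleton 0
    · exact cocycleGens_of_even hl h0 hi ▸ alphaGens_subsingleton hl i
  · exact cocycleGens_of_odd hl hi ▸ betaGens_subsingleton hl i

theorem Zc_le_boundaries_sup_span_cocycleGens {l : ℕ} (hl : 1 ≤ l) (i : ℕ) :
    Zc l i ≤ LinearMap.range dL ⊓ Dsub l i ⊔ Submodule.span ℚ (cocycleGens l i) := by
  have hspan : Submodule.span ℚ (cocycleGens l i) ≤ Dsub l i :=
    Submodule.span_le.2 fun m hm => (cocycleGens_subset_Zc hl i hm).1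
  rw [sup_comm, ← sup_inf_assoc_of_le _ hspan, sup_comm]
  exact le_inf (Zc_le_range_sup_span_cocycleGens l i) inf_le_left

/-- The cohomology of `Λ(2l)` in odd degrees is spanned (modulo boundaries) by
the classes of `β_p = y₁y₂^p`, and in positive even degrees by the classes of
`α_p = y₂^p x₁ - 2p y₁x₂y₂^{p-1}`; every cohomology group has dimension at
most 1. -/
theorem cohomology_of_loopSphereModel (l : ℕ) (hl : 1 ≤ l) :
    (∀ i, Odd i →
      Zc l i ≤ LinearMap.range dL ⊔
        Submodule.span ℚ
          {m : Mod | ∃ p, m = betaEl p ∧ mdeg l (true, 0, p, false) = i}) ∧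
    (∀ i, 0 < i → Even i →
      Zc l i ≤ LinearMap.range dL ⊔
        Submodule.span ℚ
          {m : Mod | ∃ p, m = alphaEl p ∧ 2 * l + p * (4 * l - 2) = i}) ∧
    (∀ i, Module.rank ℚ (Hc l i) ≤ 1) := by
  refine ⟨fun i hi => ?_, fun i h0 hi => ?_, fun i => ?_⟩
  · have h := Zc_le_range_sup_span_cocycleGens l i
    rwa [cocycleGens_of_odd hl hi] at h
  · have h := Zc_le_range_sup_span_cocycleGens l i
    rwa [cocycleGens_of_even hl h0 hi] at h
  · exact Submodule.rank_quotient_comap_le_one_of_le_sup_span (cocycleGens_subsingleton hl i)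
      (cocycleGens_subset_Zc hl i) (Zc_le_boundaries_sup_span_cocycleGens hl i)

end

end LoopSphereModel
end

section
/- Let A be the quotient of the free graded associative ℚ-algebra on generators x̄₁ (degree 2l−1, odd) and ȳ₁ (degree 2l−2, even) by the relations ȳ₁x̄₁x̄₁ = x̄₁x̄₁ȳ₁ and x̄₁ȳ₁ȳ₁ + ȳ₁ȳ₁x̄₁ = 2ȳ₁x̄₁ȳ₁. Then in A the elements x̄₁ and ȳ₁ do not commute; in particular A is not graded-commutative. -/
namespace PontrjaginRings

noncomputable section

/-- Free associative ℚ-algebra on the generators `x̄₁` (degree `2l-1`, odd) and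
`ȳ₁` (degree `2l-2`, even). -/
abbrev FA : Type := FreeAlgebra ℚ (Fin 2)

/-- The generator `x̄₁`. -/
def Xg : FA := FreeAlgebra.ι ℚ 0

/-- The generator `ȳ₁`. -/
def Yg : FA := FreeAlgebra.ι ℚ 1

/-- The defining relations of the Pontrjagin ring of `Ω(LS^{2l})`:
`ȳ₁x̄₁x̄₁ = x̄₁x̄₁ȳ₁` and `x̄₁ȳ₁ȳ₁ + ȳ₁ȳ₁x̄₁ = 2ȳ₁x̄₁ȳ₁`. -/
inductive RelA : FA → FA → Prop
  | yxx : RelA (Yg * Xg * Xg) (Xg * Xg * Yg)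
  | xyy : RelA (Xg * Yg * Yg + Yg * Yg * Xg) (2 * (Yg * Xg * Yg))

/-- The Pontrjagin ring `A = H_•(Ω(LS^{2l});ℚ)` as a presented algebra. -/
abbrev AlgA : Type := RingQuot RelA

/-- The class of `x̄₁` in `A`. -/
def xA : AlgA := RingQuot.mkAlgHom ℚ RelA Xg

/-- The class of `ȳ₁` in `A`. -/
def yA : AlgA := RingQuot.mkAlgHom ℚ RelA Yg

/-- Free associative ℚ-algebra on `ā₁` (degree `2l-1`, odd), `β̄₁` (degree
`2l-2`, even) and `β̄₂` (degree `4l-3`, odd). -/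
abbrev FB : Type := FreeAlgebra ℚ (Fin 3)

/-- The generator `ā₁`. -/
def Ag : FB := FreeAlgebra.ι ℚ 0

/-- The generator `β̄₁`. -/
def B1g : FB := FreeAlgebra.ι ℚ 1

/-- The generator `β̄₂`. -/
def B2g : FB := FreeAlgebra.ι ℚ 2

/-- Defining relations of the graded tensor product `T(ā₁) ⊗ Λ(β̄₁,β̄₂)`
(with Koszul signs: `ā₁` and `β̄₂` are odd, `β̄₁` is even, `β̄₂² = 0`,
and `ā₁` is otherwise free). -/
inductive RelB : FB → FB → Prop
  | ab1 : RelB (Ag * B1g) (B1g * Ag)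
  | ab2 : RelB (Ag * B2g) (-(B2g * Ag))
  | b1b2 : RelB (B1g * B2g) (B2g * B1g)
  | b2b2 : RelB (B2g * B2g) 0

/-- The Pontrjagin ring `B = H_•(Ω(S^{2l}×ΩS^{2l});ℚ) = T(ā₁) ⊗ Λ(β̄₁,β̄₂)`. -/
abbrev AlgB : Type := RingQuot RelB

/-- The class of `ā₁` in `B`. -/
def aB : AlgB := RingQuot.mkAlgHom ℚ RelB Ag

/-- The class of `β̄₁` in `B`. -/
def b1B : AlgB := RingQuot.mkAlgHom ℚ RelB B1g

/-- The class of `β̄₂` in `B`. -/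
def b2B : AlgB := RingQuot.mkAlgHom ℚ RelB B2g

/-!
Sending `x̄₁ ↦ E₀₁` and `ȳ₁ ↦ E₁₂` defines a representation of `A` on `ℚ³`: every monomial in
the two relations has degree three and contains `x̄₁²`, `ȳ₁²` or `ȳ₁x̄₁`, all of which act by zero.
In it `x̄₁ȳ₁` acts by `E₀₂ ≠ 0`, while `ȳ₁x̄₁` acts by `0`.
-/

section Lift

variable {R : Type*} [Semiring R] [Algebra ℚ R] {a b : R}

lemma lift_eq_of_relA (haa : a * a = 0) (hbb : b * b = 0) (hba : b * a = 0) ⦃u v : FA⦄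
    (h : RelA u v) : FreeAlgebra.lift ℚ ![a, b] u = FreeAlgebra.lift ℚ ![a, b] v := by
  have hx : FreeAlgebra.lift ℚ ![a, b] Xg = a := FreeAlgebra.lift_ι_apply _ _
  have hy : FreeAlgebra.lift ℚ ![a, b] Yg = b := FreeAlgebra.lift_ι_apply _ _
  cases h with
  | yxx => simp [hx, hy, haa, hba]
  | xyy => simp [hx, hy, map_ofNat, mul_assoc a, hbb, hba]

def liftA (haa : a * a = 0) (hbb : b * b = 0) (hba : b * a = 0) : AlgA →ₐ[ℚ] R :=
  RingQuot.liftAlgHom ℚ ⟨FreeAlgebra.lift ℚ ![a, b], lift_eq_of_relA haa hbb hba⟩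

@[simp]
lemma liftA_xA (haa : a * a = 0) (hbb : b * b = 0) (hba : b * a = 0) :
    liftA haa hbb hba xA = a := by
  simp [liftA, xA, Xg]

@[simp]
lemma liftA_yA (haa : a * a = 0) (hbb : b * b = 0) (hba : b * a = 0) :
    liftA haa hbb hba yA = b := by
  simp [liftA, yA, Yg]

lemma xA_mul_yA_ne_yA_mul_xA_of_mul_ne_zero (haa : a * a = 0) (hbb : b * b = 0) (hba : b * a = 0)
    (hab : a * b ≠ 0) : xA * yA ≠ yA * xA := fun h =>
  hab <| by simpa [hba] using congrArg (liftA haa hbb hba) h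

end Lift

open Matrix in
/-- In the quotient `A` of the free graded associative ℚ-algebra on `x̄₁`
(odd, degree `2l-1`) and `ȳ₁` (even, degree `2l-2`) by the relations
`ȳ₁x̄₁x̄₁ = x̄₁x̄₁ȳ₁` and `x̄₁ȳ₁ȳ₁ + ȳ₁ȳ₁x̄₁ = 2ȳ₁x̄₁ȳ₁`, the elements `x̄₁` and
`ȳ₁` do not commute; in particular `A` is not graded-commutative (as `x̄₁` is
odd and `ȳ₁` even, graded commutativity would force `x̄₁ȳ₁ = ȳ₁x̄₁`). -/
theorem xA_yA_not_commute : xA * yA ≠ yA * xA := by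
  refine xA_mul_yA_ne_yA_mul_xA_of_mul_ne_zero (R := Matrix (Fin 3) (Fin 3) ℚ)
    (a := single 0 1 1) (b := single 1 2 1) (by simp [single_mul_single_of_ne])
    (by simp [single_mul_single_of_ne]) (by simp [single_mul_single_of_ne]) ?_
  rw [single_mul_single_same, one_mul]
  exact fun h => by simpa using congrFun₂ h 0 2

end

end PontrjaginRings
end

section
/- The universal enveloping algebra of the graded Lie algebra L over ℚ spanned by x̄₁ (deg 2l−1), x̄₂ (deg 4l−2), ȳ₁ (deg 2l−2), ȳ₂ (deg 4l−3) with brackets [x̄₁,x̄₁]=x̄₂, [x̄₁,ȳ₁]=−ȳ₂/2 and all other brackets of generators zero, is isomorphic to the quotient of the free tensor algebra T(x̄₁,ȳ₁) on just x̄₁ and ȳ₁ by the two relations ȳ₁⊗x̄₁⊗x̄₁ = x̄₁⊗x̄₁⊗ȳ₁ and x̄₁⊗ȳ₁⊗ȳ₁ + ȳ₁⊗ȳ₁⊗x̄₁ = 2(ȳ₁⊗x̄₁⊗ȳ₁). -/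
namespace PontrjaginRings

noncomputable section

/-- Free associative ℚ-algebra on `x̄₁, x̄₂, ȳ₁, ȳ₂`. -/
abbrev FL : Type := FreeAlgebra ℚ (Fin 4)

def X1 : FL := FreeAlgebra.ι ℚ 0
def X2 : FL := FreeAlgebra.ι ℚ 1
def Y1 : FL := FreeAlgebra.ι ℚ 2
def Y2 : FL := FreeAlgebra.ι ℚ 3

/-- The relations `x⊗y - (-1)^{|x||y|} y⊗x = [x,y]` presenting the universal
enveloping algebra of the graded Lie algebra spanned by `x̄₁` (deg `2l-1`),
`x̄₂` (deg `4l-2`), `ȳ₁` (deg `2l-2`), `ȳ₂` (deg `4l-3`) with brackets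
`[x̄₁,x̄₁] = x̄₂`, `[x̄₁,ȳ₁] = -ȳ₂/2`, all other brackets of generators zero
(`x̄₁, ȳ₂` odd; `x̄₂, ȳ₁` even; `l ≥ 2`). -/
inductive RelU : FL → FL → Prop
  | x1x1 : RelU (X1 * X1 + X1 * X1) X2
  | x1y1 : RelU (X1 * Y1 - Y1 * X1) ((-(1 : ℚ) / 2) • Y2)
  | x1x2 : RelU (X1 * X2) (X2 * X1)
  | x1y2 : RelU (X1 * Y2 + Y2 * X1) 0
  | x2y1 : RelU (X2 * Y1) (Y1 * X2)
  | x2y2 : RelU (X2 * Y2) (Y2 * X2)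
  | y1y2 : RelU (Y1 * Y2) (Y2 * Y1)
  | y2y2 : RelU (Y2 * Y2 + Y2 * Y2) 0

/-- The universal enveloping algebra `U(L)` of the graded Lie algebra `L`. -/
abbrev UEA : Type := RingQuot RelU

set_option linter.unusedSectionVars false

namespace PRaux
section
variable {R : Type*} [Ring R] (x y : R)
  (h1 : y*x*x = x*x*y) (h2 : x*y*y + y*y*x = 2*(y*x*y))

section
include h1

lemma h1r : y*(x*x) = x*(x*y) := by rw [← mul_assoc, h1, mul_assoc]

lemma h1z (z : R) : y*(x*(x*z)) = x*(x*(y*z)) := by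
  calc y*(x*(x*z)) = (y*x*x)*z := by noncomm_ring
  _ = (x*x*y)*z := by rw [h1]
  _ = x*(x*(y*z)) := by noncomm_ring

end
section
include h2

lemma h2r : x*(y*y) = 2*(y*(x*y)) - y*(y*x) := by
  have h := eq_sub_of_add_eq h2
  calc x*(y*y) = x*y*y := by noncomm_ring
  _ = 2*(y*x*y) - y*y*x := h
  _ = _ := by noncomm_ring

lemma h2z (z : R) : x*(y*(y*z)) = 2*(y*(x*(y*z))) - y*(y*(x*z)) := by
  have h := congrArg (· * z) (h2r x y h2)
  calc x*(y*(y*z)) = x*(y*y)*z := by noncomm_ring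
  _ = (2*(y*(x*y)) - y*(y*x))*z := h
  _ = _ := by noncomm_ring

end
include h1 h2

lemma e5 : y*(y*(x*x)) = x*(x*(y*y)) := by rw [h1r x y h1, h1z x y h1]

lemma lem_x1y2 : x * (-2*(x*y - y*x)) + (-2*(x*y - y*x)) * x = 0 := by
  noncomm_ring
  rw [h1r x y h1]; abel

lemma lem_x2y2 : (2*(x*x)) * (-2*(x*y - y*x)) = (-2*(x*y - y*x)) * (2*(x*x)) := by
  noncomm_ring
  rw [h1r x y h1, h1z x y h1]

lemma lem_y1y2 : y * (-2*(x*y - y*x)) = (-2*(x*y - y*x)) * y := by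
  noncomm_ring
  rw [h2r x y h2]; noncomm_ring

lemma lem_y2y2 :
    (-2*(x*y - y*x))*(-2*(x*y - y*x)) + (-2*(x*y - y*x))*(-2*(x*y - y*x)) = 0 := by
  noncomm_ring
  rw [h1z x y h1, h2z x y h2, e5 x y h1 h2]
  have h2' : x*y*y + y*y*x = y*x*y + y*x*y := by rw [h2, two_mul]
  have hL := congrArg (x * ·) h2'
  have hR := congrArg (· * x) h2'
  simp only [mul_add, add_mul, mul_assoc] at hL hR
  have key : x*(y*(x*y)) + x*(y*(x*y)) = y*(x*(y*x)) + y*(x*(y*x)) := by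
    rw [← hL, ← hR, e5 x y h1 h2]; abel
  have key4 := congrArg (fun t : R => (4:ℤ) • t) key
  abel_nf at key4 ⊢
  rw [key4]; noncomm_ring

end

lemma ratsmul {R : Type*} [Ring R] [Algebra ℚ R] (c : R) : (-2:ℚ) • c = -2 * c := by
  rw [Algebra.smul_def, map_neg]
  norm_num [map_ofNat]

lemma cancel2 {R : Type*} [Ring R] [Algebra ℚ R] {a b : R} (h : a + a = b + b) : a = b := by
  have := congrArg (fun t : R => ((1:ℚ)/2) • t) h
  simpa [← two_smul ℚ, smul_smul] using this

end PRaux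
-- relations holding in AlgA
lemma hA1 : yA * xA * xA = xA * xA * yA := by
  have h := RingQuot.mkAlgHom_rel ℚ RelA.yxx
  simpa [xA, yA, map_mul] using h

lemma hA2 : xA * yA * yA + yA * yA * xA = 2 * (yA * xA * yA) := by
  have h := RingQuot.mkAlgHom_rel ℚ RelA.xyy
  simpa [xA, yA, map_mul, map_add, map_ofNat] using h

-- classes of generators in UEA
def xU : UEA := RingQuot.mkAlgHom ℚ RelU X1
def x2U : UEA := RingQuot.mkAlgHom ℚ RelU X2
def yU : UEA := RingQuot.mkAlgHom ℚ RelU Y1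
def y2U : UEA := RingQuot.mkAlgHom ℚ RelU Y2

lemma hu_xx : xU * xU + xU * xU = x2U := by
  have h := RingQuot.mkAlgHom_rel ℚ RelU.x1x1
  simpa [xU, x2U, map_mul, map_add] using h

lemma hu_xy : xU * yU - yU * xU = (-(1:ℚ)/2) • y2U := by
  have h := RingQuot.mkAlgHom_rel ℚ RelU.x1y1
  simpa [xU, yU, y2U, map_mul, map_sub, map_smul] using h

lemma hu_x2y : x2U * yU = yU * x2U := by
  have h := RingQuot.mkAlgHom_rel ℚ RelU.x2y1
  simpa [x2U, yU, map_mul] using h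

lemma hu_yy2 : yU * y2U = y2U * yU := by
  have h := RingQuot.mkAlgHom_rel ℚ RelU.y1y2
  simpa [yU, y2U, map_mul] using h

lemma rA1 : yU * xU * xU = xU * xU * yU := by
  have h : (xU*xU)*yU + (xU*xU)*yU = yU*(xU*xU) + yU*(xU*xU) := by
    have hx := hu_x2y
    rw [← hu_xx] at hx
    calc (xU*xU)*yU + (xU*xU)*yU = (xU*xU + xU*xU)*yU := by noncomm_ring
      _ = yU*(xU*xU + xU*xU) := hx
      _ = _ := by noncomm_ring
  have h' := PRaux.cancel2 h
  calc yU*xU*xU = yU*(xU*xU) := by rw [mul_assoc]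
    _ = (xU*xU)*yU := h'.symm
    _ = xU*xU*yU := rfl

lemma rA2 : xU * yU * yU + yU * yU * xU = 2 * (yU * xU * yU) := by
  have hc : (xU*yU - yU*xU)*yU = yU*(xU*yU - yU*xU) := by
    rw [hu_xy, smul_mul_assoc, mul_smul_comm, hu_yy2]
  rw [sub_mul, mul_sub, sub_eq_sub_iff_add_eq_add] at hc
  calc xU*yU*yU + yU*yU*xU = xU*yU*yU + yU*(yU*xU) := by noncomm_ring
    _ = yU*(xU*yU) + yU*xU*yU := hc
    _ = 2*(yU*xU*yU) := by noncomm_ring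

-- the map UEA → AlgA
def fgen : Fin 4 → AlgA
  | 0 => xA
  | 1 => 2 * (xA * xA)
  | 2 => yA
  | 3 => -2 * (xA * yA - yA * xA)

def phi : UEA →ₐ[ℚ] AlgA := by
  refine RingQuot.liftAlgHom ℚ ⟨FreeAlgebra.lift ℚ fgen, ?_⟩
  intro a b r
  have e1 : yA*xA*xA = xA*xA*yA := hA1
  have e2 : xA*yA*yA + yA*yA*xA = 2*(yA*xA*yA) := hA2
  cases r <;>
    simp only [X1, X2, Y1, Y2, map_mul, map_add, map_sub, map_smul, map_zero,
      FreeAlgebra.lift_ι_apply, fgen]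
  · exact (two_mul _).symm
  · rw [← PRaux.ratsmul, smul_smul]; norm_num
  · noncomm_ring
  · exact PRaux.lem_x1y2 xA yA e1 e2
  · noncomm_ring; rw [PRaux.h1r xA yA e1]
  · exact PRaux.lem_x2y2 xA yA e1 e2
  · exact PRaux.lem_y1y2 xA yA e1 e2
  · exact PRaux.lem_y2y2 xA yA e1 e2

-- the map AlgA → UEA
def ggen : Fin 2 → UEA
  | 0 => xU
  | 1 => yU

def psi : AlgA →ₐ[ℚ] UEA := by
  refine RingQuot.liftAlgHom ℚ ⟨FreeAlgebra.lift ℚ ggen, ?_⟩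
  intro a b r
  cases r <;>
    simp only [Xg, Yg, map_mul, map_add, map_ofNat,
      FreeAlgebra.lift_ι_apply, ggen]
  · exact rA1
  · exact rA2

lemma phi_mk (w : FL) : phi (RingQuot.mkAlgHom ℚ RelU w) = FreeAlgebra.lift ℚ fgen w := by
  simp [phi, RingQuot.liftAlgHom_mkAlgHom_apply]

lemma psi_mk (w : FA) : psi (RingQuot.mkAlgHom ℚ RelA w) = FreeAlgebra.lift ℚ ggen w := by
  simp [psi, RingQuot.liftAlgHom_mkAlgHom_apply]

lemma psi_xA : psi xA = xU := by
  rw [xA, psi_mk, Xg, FreeAlgebra.lift_ι_apply]; rfl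

lemma psi_yA : psi yA = yU := by
  rw [yA, psi_mk, Yg, FreeAlgebra.lift_ι_apply]; rfl

lemma phi_x : phi xU = xA := by
  rw [xU, phi_mk, X1, FreeAlgebra.lift_ι_apply]; rfl

lemma phi_x2 : phi x2U = 2 * (xA * xA) := by
  rw [x2U, phi_mk, X2, FreeAlgebra.lift_ι_apply]; rfl

lemma phi_y : phi yU = yA := by
  rw [yU, phi_mk, Y1, FreeAlgebra.lift_ι_apply]; rfl

lemma phi_y2 : phi y2U = -2 * (xA * yA - yA * xA) := by
  rw [y2U, phi_mk, Y2, FreeAlgebra.lift_ι_apply]; rfl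

lemma phi_psi : phi.comp psi = AlgHom.id ℚ AlgA := by
  apply RingQuot.ringQuot_ext'
  apply FreeAlgebra.hom_ext
  funext i
  fin_cases i
  · show phi (psi xA) = xA
    rw [psi_xA, phi_x]
  · show phi (psi yA) = yA
    rw [psi_yA, phi_y]

lemma psi_phi : psi.comp phi = AlgHom.id ℚ UEA := by
  apply RingQuot.ringQuot_ext'
  apply FreeAlgebra.hom_ext
  funext i
  fin_cases i
  · show psi (phi xU) = xU
    rw [phi_x, psi_xA]
  · show psi (phi x2U) = x2U
    rw [phi_x2, map_mul, map_mul, map_ofNat, psi_xA, two_mul, hu_xx]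
  · show psi (phi yU) = yU
    rw [phi_y, psi_yA]
  · show psi (phi y2U) = y2U
    rw [phi_y2, map_mul, map_sub, map_mul, map_mul, psi_xA, psi_yA]
    have : (psi (-2 : AlgA)) = (-2 : UEA) := by rw [map_neg, map_ofNat]
    rw [this, ← PRaux.ratsmul, hu_xy, smul_smul]
    norm_num

/-- The universal enveloping algebra of the graded Lie algebra on `x̄₁, x̄₂,
ȳ₁, ȳ₂` with brackets `[x̄₁,x̄₁] = x̄₂`, `[x̄₁,ȳ₁] = -ȳ₂/2` (all other brackets
of generators zero) is isomorphic to the quotient of the free tensor algebra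
on just `x̄₁` and `ȳ₁` by the two relations `ȳ₁x̄₁x̄₁ = x̄₁x̄₁ȳ₁` and
`x̄₁ȳ₁ȳ₁ + ȳ₁ȳ₁x̄₁ = 2ȳ₁x̄₁ȳ₁`. -/
theorem uea_iso_presented (l : ℕ) (hl : 2 ≤ l) : Nonempty (UEA ≃ₐ[ℚ] AlgA) := by
  exact ⟨AlgEquiv.ofAlgHom phi psi phi_psi psi_phi⟩

end

end PontrjaginRings
end

section
/- With A = T(x̄₁,ȳ₁)/(ȳ₁x̄₁² = x̄₁²ȳ₁, x̄₁ȳ₁² + ȳ₁²x̄₁ = 2ȳ₁x̄₁ȳ₁) as above and the twisted multiplication a ·_{ȳ₁} b := a ȳ₁ b, the element ȳ₁ is not central for ·_{ȳ₁}: ȳ₁ȳ₁x̄₁ ≠ x̄₁ȳ₁ȳ₁ in A. In B = T(ā₁) ⊗ Λ(β̄₁,β̄₂) with twisted multiplication a ·_{β̄₁} b := a β̄₁ b, the element β̄₁ is central for ·_{β̄₁}. -/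
namespace PontrjaginRings

noncomputable section

open Polynomial in
/-- Representation space for `A`: two copies of `ℚ[t]`. -/
abbrev VA : Type := ℚ[X] × ℚ[X]

open Polynomial in
/-- The image of `x̄₁`: `(g,h) ↦ (0, g')`. -/
def xOp : Module.End ℚ VA where
  toFun p := (0, derivative p.1)
  map_add' p q := by simp
  map_smul' c p := by simp

open Polynomial in
/-- The image of `ȳ₁`: multiplication by `t`. -/
def yOp : Module.End ℚ VA where
  toFun p := (X * p.1, X * p.2)
  map_add' p q := by simp [mul_add]
  map_smul' c p := by
    refine Prod.ext ?_ ?_ <;> simp [Polynomial.smul_eq_C_mul] <;> ring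

open Polynomial in lemma rel_yxx : yOp * xOp * xOp = xOp * xOp * yOp := by
  refine LinearMap.ext fun p => Prod.ext ?_ ?_ <;>
    simp [xOp, yOp, Module.End.mul_apply, derivative_mul]

open Polynomial in lemma rel_xyy : xOp * yOp * yOp + yOp * yOp * xOp = 2 * (yOp * xOp * yOp) := by
  refine LinearMap.ext fun p => Prod.ext ?_ ?_ <;>
    simp [xOp, yOp, Module.End.mul_apply, derivative_mul] <;> ring

/-- The representation of the free algebra. -/
def phiA : FA →ₐ[ℚ] Module.End ℚ VA := FreeAlgebra.lift ℚ ![xOp, yOp]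

lemma phiA_X : phiA Xg = xOp := by simp [phiA, Xg]

lemma phiA_Y : phiA Yg = yOp := by simp [phiA, Yg]

lemma phiA_rel : ∀ ⦃a b : FA⦄, RelA a b → phiA a = phiA b := by
  intro a b h
  cases h with
  | yxx => simp only [map_mul, phiA_X, phiA_Y]; exact rel_yxx
  | xyy => simp only [map_add, map_mul, map_ofNat, phiA_X, phiA_Y]; exact rel_xyy

/-- The representation of `A`. -/
def PhiA : AlgA →ₐ[ℚ] Module.End ℚ VA := RingQuot.liftAlgHom ℚ ⟨phiA, phiA_rel⟩

lemma PhiA_x : PhiA xA = xOp := by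
  rw [xA, PhiA, RingQuot.liftAlgHom_mkAlgHom_apply, phiA_X]

lemma PhiA_y : PhiA yA = yOp := by
  rw [yA, PhiA, RingQuot.liftAlgHom_mkAlgHom_apply, phiA_Y]

open Polynomial in lemma yyx_ne_xyy : yA * yA * xA ≠ xA * yA * yA := by
  intro h
  have h2 : yOp * yOp * xOp = xOp * yOp * yOp := by
    have := congrArg PhiA h
    simpa only [map_mul, PhiA_x, PhiA_y] using this
  have h3 := congrFun (congrArg DFunLike.coe h2) ((1 : ℚ[X]), (0 : ℚ[X]))
  simp only [xOp, yOp, Module.End.mul_apply, LinearMap.coe_mk, AddHom.coe_mk, mul_zero,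
    mul_one, derivative_one, derivative_mul, derivative_X, Prod.mk.injEq] at h3
  have h4 : (X * X : ℚ[X]).derivative = 0 := by
    simpa using h3.2.symm
  rw [derivative_mul, derivative_X] at h4
  simp only [one_mul, mul_one] at h4
  have := congrArg (fun p => Polynomial.eval 1 p) h4
  simp at this

lemma b1_comm (z : AlgB) : b1B * z = z * b1B := by
  obtain ⟨w, rfl⟩ := RingQuot.mkAlgHom_surjective ℚ RelB z
  induction w using FreeAlgebra.induction with
  | grade0 r => rw [AlgHom.commutes]; exact (Algebra.commutes r b1B).symm
  | grade1 i =>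
    fin_cases i
    · have := RingQuot.mkAlgHom_rel ℚ RelB.ab1
      simp only [map_mul] at this
      exact this.symm
    · rfl
    · have := RingQuot.mkAlgHom_rel ℚ RelB.b1b2
      simp only [map_mul] at this
      exact this
  | mul a b ha hb =>
    rw [map_mul, ← mul_assoc, ha, mul_assoc, hb, mul_assoc]
  | add a b ha hb =>
    rw [map_add, mul_add, add_mul, ha, hb]

/-- For the twisted multiplication `a ·_{ȳ₁} b := aȳ₁b` on the Pontrjagin ring
`A` of `Ω(LS^{2l})`, the element `ȳ₁` is not central:
`ȳ₁ ·_{ȳ₁} x̄₁ = ȳ₁ȳ₁x̄₁ ≠ x̄₁ȳ₁ȳ₁ = x̄₁ ·_{ȳ₁} ȳ₁` (the Koszul sign is `+1`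
since `ȳ₁` is even).  In `B = T(ā₁) ⊗ Λ(β̄₁,β̄₂)` with the twisted
multiplication `a ·_{β̄₁} b := aβ̄₁b`, the element `β̄₁` is central:
`β̄₁β̄₁z = zβ̄₁β̄₁` for all `z` (all Koszul signs are `+1` since `β̄₁` is
even). -/
theorem twisted_centrality (l : ℕ) (hl : 2 ≤ l) :
    yA * yA * xA ≠ xA * yA * yA ∧
    ∀ z : AlgB, b1B * b1B * z = z * (b1B * b1B) := by
  refine ⟨yyx_ne_xyy, fun z => ?_⟩
  rw [mul_assoc, b1_comm z, ← mul_assoc, b1_comm z, mul_assoc]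

end

end PontrjaginRings
end
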